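/- Let τ be a chord diagram of order n ≥ 1 and let τ' (of order n − 1) be obtained from τ by reduction operation (α), i.e. by deleting an isolated chord {i, i+1} with τ(i) = i + 1 and renumbering. Then F(τ') = F(τ) − 1, and hence (n − 1) + 1 − F(τ') = n + 1 − F(τ); in particular operation (α) preserves realizability on the torus. -/

import Mathlib

/-- Strict cyclic betweenness on the cyclic group with `m` elements (`ZMod m`, realized as
`Fin m` so that the group is empty when `m = 0`): `b` lies on the open cyclic arc
from `a` to `c`. -/
def cyclicSbtw {m : ℕ} (a b c : Fin m) : Prop :=
  0 < (b.val + (m - a.val)) % m ∧ (b.val + (m - a.val)) % m < (c.val + (m - a.val)) % m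

/-- A chord diagram of order `n`: a fixed-point-free involution `τ` of the cyclic group
with `2n` elements (`ZMod (2n)`, realized as `Fin (2n)`); its chords are the pairs
`{i, τ i}`. -/
structure ChordDiagram (n : ℕ) where
  τ : Equiv.Perm (Fin (2 * n))
  invol : ∀ i, τ (τ i) = i
  fpf : ∀ i, τ i ≠ i

namespace ChordDiagram

/-- The boundary permutation `φ(i) = τ(i) + 1`. -/
def boundary {n : ℕ} (D : ChordDiagram n) : Equiv.Perm (Fin (2 * n)) :=
  D.τ.trans (finRotate (2 * n))

/-- The number `F` of boundary components: the number of orbits of the boundary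
permutation, with the convention `F = 1` when `n = 0`. -/
noncomputable def F {n : ℕ} (D : ChordDiagram n) : ℕ :=
  if n = 0 then 1
  else Nat.card (Quotient (MulAction.orbitRel (Subgroup.zpowers D.boundary) (Fin (2 * n))))

/-- Build a chord diagram from an involutive, fixed-point-free function. -/
def ofInvol {n : ℕ} (f : Fin (2 * n) → Fin (2 * n)) (h : Function.Involutive f)
    (hf : ∀ i, f i ≠ i) : ChordDiagram n :=
  ⟨Function.Involutive.toPerm f h, h, hf⟩

/-- The empty chord diagram (order 0). -/
def emptyDiagram : ChordDiagram 0 := ⟨1, fun i => i.elim0, fun i => i.elim0⟩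

/-- The chord diagram `(abab)`: chords `{0,2}, {1,3}` on `ZMod 4`. -/
def abab : ChordDiagram 2 := ofInvol ![2, 3, 0, 1] (by intro x; fin_cases x <;> rfl) (by decide)

/-- The chord diagram `(abcabc)`: chords `{0,3}, {1,4}, {2,5}` on `ZMod 6`. -/
def abcabc : ChordDiagram 3 :=
  ofInvol ![3, 4, 5, 0, 1, 2] (by intro x; fin_cases x <;> rfl) (by decide)

/-- The forbidden diagram `(ababcdcd)`: chords `{0,2},{1,3},{4,6},{5,7}` on `ZMod 8`. -/
def ababcdcd : ChordDiagram 4 :=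
  ofInvol ![2, 3, 0, 1, 6, 7, 4, 5] (by intro x; fin_cases x <;> rfl) (by decide)

/-- The forbidden diagram `(abcdabcd)`: chords `{0,4},{1,5},{2,6},{3,7}` on `ZMod 8`. -/
def abcdabcd : ChordDiagram 4 :=
  ofInvol ![4, 5, 6, 7, 0, 1, 2, 3] (by intro x; fin_cases x <;> rfl) (by decide)

/-- The forbidden diagram `(abacdcbd)`: chords `{0,2},{1,6},{3,5},{4,7}` on `ZMod 8`. -/
def abacdcbd : ChordDiagram 4 :=
  ofInvol ![2, 6, 0, 5, 7, 3, 1, 4] (by intro x; fin_cases x <;> rfl) (by decide)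

/-- The forbidden diagram `(abcadbdc)`: chords `{0,3},{1,5},{2,7},{4,6}` on `ZMod 8`. -/
def abcadbdc : ChordDiagram 4 :=
  ofInvol ![3, 5, 7, 0, 6, 1, 4, 2] (by intro x; fin_cases x <;> rfl) (by decide)

/-- The chords `{i, τ i}` and `{j, τ j}` interlace: exactly one of `j, τ j` lies on
the open cyclic arc from `i` to `τ i`. -/
def Interlaces {n : ℕ} (D : ChordDiagram n) (i j : Fin (2 * n)) : Prop :=
  Xor' (cyclicSbtw i j (D.τ i)) (cyclicSbtw i (D.τ j) (D.τ i))

/-- The type of chords of a chord diagram. -/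
def Chord {n : ℕ} (D : ChordDiagram n) : Type :=
  {p : Sym2 (Fin (2 * n)) // ∃ i, p = s(i, D.τ i)}

/-- The interlacement graph (graph of loops) of a chord diagram: vertices are the chords,
edges are the interlacing pairs of distinct chords. -/
def interGraph {n : ℕ} (D : ChordDiagram n) : SimpleGraph D.Chord where
  Adj c d := c ≠ d ∧
    ((∃ i j, c.1 = s(i, D.τ i) ∧ d.1 = s(j, D.τ j) ∧ D.Interlaces i j) ∨
     (∃ i j, d.1 = s(i, D.τ i) ∧ c.1 = s(j, D.τ j) ∧ D.Interlaces i j))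
  symm := by
    constructor
    intro c d h
    exact ⟨h.1.symm, h.2.symm⟩
  loopless := by
    constructor
    intro c h
    exact h.1 rfl

/-- A cyclic-order-preserving injection between cyclic groups. -/
def CycEmb {k m : ℕ} (f : Fin k → Fin m) : Prop :=
  Function.Injective f ∧ ∀ a b c, cyclicSbtw a b c → cyclicSbtw (f a) (f b) (f c)

/-- `D` contains the diagram `P`: the sub-diagram of `D` induced by some set of its chords
equals `P` up to rotation, i.e. there is a cyclic-order-preserving injection
`f : ZMod (2k) → ZMod (2n)` intertwining the involutions. -/
def Contains {n k : ℕ} (D : ChordDiagram n) (P : ChordDiagram k) : Prop :=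
  ∃ f : Fin (2 * k) → Fin (2 * n), CycEmb f ∧ ∀ i, D.τ (f i) = f (P.τ i)

/-- `D'` is obtained from `D` by deleting the chord `{j, τ j}` and renumbering the
remaining `2n` endpoints by the cyclic-order-preserving bijection onto `ZMod (2n)`. -/
def DeleteChord {n : ℕ} (D : ChordDiagram (n + 1)) (j : Fin (2 * (n + 1)))
    (D' : ChordDiagram n) : Prop :=
  ∃ f : Fin (2 * n) → Fin (2 * (n + 1)), CycEmb f ∧
    Set.range f = ({j, D.τ j} : Set (Fin (2 * (n + 1))))ᶜ ∧
    ∀ i, D.τ (f i) = f (D'.τ i)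

/-- Reduction operation (α): deletion of an isolated chord `{i, i+1}` (where `τ i = i + 1`). -/
def StepAlpha {n : ℕ} (D : ChordDiagram (n + 1)) (D' : ChordDiagram n) : Prop :=
  ∃ i, D.τ i = finRotate (2 * (n + 1)) i ∧ DeleteChord D i D'

/-- Reduction operation (β): deletion of the chord `{i+1, τ(i+1)}` from a parallel pair,
i.e. `τ(i+1) = τ(i) - 1` with the chords `{i, τ i}` and `{i+1, τ(i+1)}` distinct. -/
def StepBeta {n : ℕ} (D : ChordDiagram (n + 1)) (D' : ChordDiagram n) : Prop :=
  ∃ i, D.τ (finRotate (2 * (n + 1)) i) = (finRotate (2 * (n + 1))).symm (D.τ i) ∧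
    D.τ i ≠ finRotate (2 * (n + 1)) i ∧
    DeleteChord D (finRotate (2 * (n + 1)) i) D'

/-- One reduction step (operation (α) or (β)) between chord diagrams. -/
def Step (p q : Σ n, ChordDiagram n) : Prop :=
  ∃ h : p.1 = q.1 + 1,
    StepAlpha (cast (congrArg ChordDiagram h) p.2) q.2 ∨
    StepBeta (cast (congrArg ChordDiagram h) p.2) q.2

/-- `p` reduces to `q` by finitely many operations (α), (β) (possibly none). -/
def Reduces (p q : Σ n, ChordDiagram n) : Prop := Relation.ReflTransGen Step p q

/-- `D` reduces to one of the diagrams `()`, `(abab)`, `(abcabc)`. -/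
def ReducesToBasic {n : ℕ} (D : ChordDiagram n) : Prop :=
  Reduces ⟨n, D⟩ ⟨0, emptyDiagram⟩ ∨ Reduces ⟨n, D⟩ ⟨2, abab⟩ ∨ Reduces ⟨n, D⟩ ⟨3, abcabc⟩

end ChordDiagram

/-- A simple graph is a disjoint union of a (possibly empty) set of isolated vertices and a
complete bipartite or complete tripartite graph: there are three pairwise disjoint sets
`A`, `B`, `C` of vertices (a part may be empty; `C = ∅` gives the complete bipartite case)
such that two vertices are adjacent iff they lie in two different ones of these parts;
all remaining vertices are isolated. -/
def IsIsolatedPlusCompleteMultipartite {V : Type*} (G : SimpleGraph V) : Prop :=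
  ∃ A B C : Set V, Disjoint A B ∧ Disjoint A C ∧ Disjoint B C ∧
    ∀ v w, G.Adj v w ↔
      ((v ∈ A ∧ w ∈ B) ∨ (v ∈ B ∧ w ∈ A) ∨ (v ∈ A ∧ w ∈ C) ∨ (v ∈ C ∧ w ∈ A) ∨
       (v ∈ B ∧ w ∈ C) ∨ (v ∈ C ∧ w ∈ B))

/-!
Deleting the isolated chord `{j, j + 1}` turns `j + 1` into a fixed point of the boundary
permutation `φ`, while `φ j = j + 2`. On the remaining points the renumbering conjugates the
boundary permutation of the reduced diagram to `φ` with the point `j` short-circuited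
(`x ↦ φ (φ x)` whenever `φ x = j`), and short-circuiting a point that is not fixed does not change
the number of cycles. Hence exactly one boundary component, `{j + 1}`, is lost. For a single chord
`φ` is the identity of `ZMod 2`, which matches the convention `F = 1` for the empty diagram.
-/

open Equiv Function

theorem Setoid.card_quotient_eq_add_one {α β : Type*} [Finite β] {r : Setoid α}
    {r' : Setoid β} (f : β → α) (hf : ∀ b b', r' b b' ↔ r (f b) (f b')) (q : α)
    (hfq : ∀ b, f b ≠ q) (hq : ∀ x, r q x → x = q) (hcover : ∀ x, x ≠ q → ∃ b, r x (f b)) :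
    Nat.card (Quotient r) = Nat.card (Quotient r') + 1 := by
  let e : Quotient r' ⊕ Unit → Quotient r :=
    Sum.elim (Quotient.map' f fun b b' => (hf b b').1) fun _ => ⟦q⟧
  have he : Bijective e := by
    refine ⟨Injective.sumElim ?_ (injective_of_subsingleton _) ?_, ?_⟩
    · rintro ⟨b⟩ ⟨b'⟩ h
      exact Quotient.sound ((hf b b').2 (Quotient.exact h))
    · rintro ⟨b⟩ - h
      exact hfq b (hq _ (Setoid.symm (Quotient.exact h)))
    · rintro ⟨x⟩
      by_cases hx : x = q
      · exact ⟨.inr (), by rw [hx]; rfl⟩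
      · obtain ⟨b, hb⟩ := hcover x hx
        exact ⟨.inl ⟦b⟧, Quotient.sound (Setoid.symm hb)⟩
  rw [← Nat.card_eq_of_bijective e he, Nat.card_sum, Nat.card_unique (α := Unit)]

namespace Equiv.Perm

variable {α β : Type*}

theorem orbitRel_zpowers_eq_sameCycle_setoid (σ : Perm α) :
    MulAction.orbitRel (Subgroup.zpowers σ) α = SameCycle.setoid σ := by
  ext x y
  rw [MulAction.orbitRel_apply, MulAction.mem_orbit_iff]
  constructor
  · rintro ⟨⟨_, k, rfl⟩, hk⟩
    exact SameCycle.symm ⟨k, hk⟩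
  · intro h
    obtain ⟨k, hk⟩ := h.symm
    exact ⟨⟨σ ^ k, k, rfl⟩, hk⟩

theorem SameCycle.map_of_forall_sameCycle [Finite α] {σ : Perm α} {π : Perm β} {g : α → β}
    {S : Set α} (hS : Set.MapsTo σ S S) (hstep : ∀ x ∈ S, π.SameCycle (g x) (g (σ x)))
    {x y : α} (hx : x ∈ S) (h : σ.SameCycle x y) : π.SameCycle (g x) (g y) := by
  obtain ⟨k, -, rfl⟩ := h.exists_pow_eq'
  clear h
  induction k with
  | zero => rfl
  | succ k ih =>
    rw [pow_succ', Perm.mul_apply]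
    exact ih.trans (hstep _ (by rw [← iterate_eq_pow]; exact hS.iterate k hx))

theorem card_quotient_sameCycle_eq_add_one [Finite α] [Finite β] [DecidableEq α] {σ : Perm α}
    {π : Perm β} {f : β → α} (hf : Injective f) {p q : α} (hrange : Set.range f = {p, q}ᶜ)
    (hq : σ q = q) (hp : σ p ≠ p) (hπ : ∀ b, f (π b) = if σ (f b) = p then σ p else σ (f b)) :
    Nat.card (Quotient (SameCycle.setoid σ)) = Nat.card (Quotient (SameCycle.setoid π)) + 1 := by
  have hmem : ∀ x, x ∈ Set.range f ↔ x ≠ p ∧ x ≠ q := by simp [hrange]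
  have hne_q : ∀ {x}, x ≠ q → σ x ≠ q := fun hx h => hx (σ.injective (h.trans hq.symm))
  have hσp : σ p ∈ Set.range f := (hmem _).2 ⟨hp, hne_q fun h => hp (h ▸ hq)⟩
  refine Setoid.card_quotient_eq_add_one f (fun b b' => ⟨fun h => ?_, fun h => ?_⟩) q
    (fun b => ((hmem _).1 ⟨b, rfl⟩).2) (fun x h => (SameCycle.eq_of_left h hq).symm) ?_
  · refine SameCycle.map_of_forall_sameCycle (Set.mapsTo_univ _ _) (fun b _ => ?_) trivial h
    rw [hπ]
    split_ifs with hb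
    · rw [← hb]
      exact sameCycle_apply_right.2 (sameCycle_apply_right.2 SameCycle.rfl)
    · exact sameCycle_apply_right.2 SameCycle.rfl
  · have : Nonempty β := ⟨b⟩
    -- `d` retracts `α` onto `β`, sending the deleted point `p` to (the preimage of) `σ p`.
    let d : α → β := fun x => invFun f (if x = p then σ p else x)
    have hdf : ∀ b, d (f b) = b := fun b => by
      simp only [d, if_neg ((hmem _).1 ⟨b, rfl⟩).1, leftInverse_invFun hf b]
    have hdσf : ∀ b, d (σ (f b)) = π b := fun b => by
      simp only [d, ← hπ b, leftInverse_invFun hf (π b)]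
    have hstep : ∀ x ∈ ({q}ᶜ : Set α), π.SameCycle (d x) (d (σ x)) := by
      intro x hx
      by_cases hxp : x = p
      · have hdσp : d (σ p) = d p := by simp [d, hp]
        rw [hxp, hdσp]
      · obtain ⟨b, rfl⟩ := (hmem x).2 ⟨hxp, hx⟩
        rw [hdf, hdσf]
        exact sameCycle_apply_right.2 SameCycle.rfl
    change π.SameCycle b b'
    simpa only [hdf] using SameCycle.map_of_forall_sameCycle (S := {q}ᶜ) (fun _ => hne_q) hstep
      ((hmem _).1 ⟨b, rfl⟩).2 h
  · intro x hx
    by_cases hxp : x = p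
    · obtain ⟨b, hb⟩ := hσp
      exact ⟨b, hb ▸ hxp ▸ sameCycle_apply_right.2 SameCycle.rfl⟩
    · obtain ⟨b, rfl⟩ := (hmem x).2 ⟨hxp, hx⟩
      exact ⟨b, SameCycle.rfl⟩

end Equiv.Perm

theorem cyclicSbtw_iff {m : ℕ} (a b c : Fin m) :
    cyclicSbtw a b c ↔ 0 < (b - a).val ∧ (b - a).val < (c - a).val := by
  simp only [cyclicSbtw, Fin.val_sub, Nat.add_comm]

theorem Fin.val_add_one_sub_of_lt {m : ℕ} [NeZero m] {a x : Fin m} (h : (x - a).val + 1 < m) :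
    (x + 1 - a).val = (x - a).val + 1 := by
  rw [add_sub_right_comm, Fin.val_add, Fin.val_one', Nat.mod_eq_of_lt (by omega : 1 < m),
    Nat.mod_eq_of_lt h]

theorem Fin.add_one_add_one_ne_self {m : ℕ} [NeZero m] (hm : 2 < m) (x : Fin m) :
    x + 1 + 1 ≠ x := by
  have h1 : (x + 1 - x).val = 1 := by
    rw [add_sub_cancel_left, Fin.val_one', Nat.mod_eq_of_lt (by omega)]
  have h2 : (x + 1 + 1 - x).val = 2 := by rw [Fin.val_add_one_sub_of_lt (by omega), h1]
  intro e
  rw [e, sub_self, Fin.val_zero] at h2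
  omega

namespace ChordDiagram.CycEmb

variable {k m : ℕ} [NeZero k] [NeZero m] {f : Fin k → Fin m}

theorem not_cyclicSbtw_apply_add_one (hk : 1 < k) (hf : CycEmb f) (a b : Fin k) :
    ¬ cyclicSbtw (f a) (f b) (f (a + 1)) := by
  intro h
  rw [cyclicSbtw_iff] at h
  have hba : (b - a).val ≠ 0 := fun hb => by
    simp [sub_eq_zero.1 (Fin.val_eq_zero_iff.1 hb)] at h
  have hba1 : (b - a).val ≠ 1 := fun hb => by
    have : b - a = 1 := Fin.ext (by rw [hb, Fin.val_one', Nat.mod_eq_of_lt hk])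
    simp [sub_eq_iff_eq_add'.1 this] at h
  have hsucc : cyclicSbtw a (a + 1) b := by
    rw [cyclicSbtw_iff, add_sub_cancel_left, Fin.val_one', Nat.mod_eq_of_lt hk]
    omega
  have := (cyclicSbtw_iff _ _ _).1 (hf.2 _ _ _ hsucc)
  omega

theorem apply_add_one_eq (hk : 1 < k) (hf : CycEmb f) {a : Fin k} {y : Fin m}
    (hy : y ∈ Set.range f) (hya : y ≠ f a) (hgap : ∀ x ∈ Set.range f, ¬ cyclicSbtw (f a) x y) :
    f (a + 1) = y := by
  have hpos : ∀ {x}, x ≠ f a → 0 < (x - f a).val := fun hx =>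
    Nat.pos_of_ne_zero (by rwa [Ne, Fin.val_eq_zero_iff, sub_eq_zero])
  have hsucc : f (a + 1) ≠ f a := by
    rw [Ne, hf.1.eq_iff, add_eq_left, ← Fin.val_inj, Fin.val_one', Nat.mod_eq_of_lt hk,
      Fin.val_zero]
    exact one_ne_zero
  by_contra hne
  have hdist : (f (a + 1) - f a).val ≠ (y - f a).val := fun h =>
    hne (sub_left_injective (Fin.val_injective h))
  obtain ⟨b, rfl⟩ := hy
  rcases hdist.lt_or_gt with hlt | hgt
  · exact hgap _ ⟨a + 1, rfl⟩ ((cyclicSbtw_iff _ _ _).2 ⟨hpos hsucc, hlt⟩)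
  · exact hf.not_cyclicSbtw_apply_add_one hk a b ((cyclicSbtw_iff _ _ _).2 ⟨hpos hya, hgt⟩)

theorem apply_add_one_of_range_eq (hk : 1 < k) (hm : 3 < m) (hf : CycEmb f) {j : Fin m}
    (hrange : Set.range f = {j, j + 1}ᶜ) (a : Fin k) :
    f (a + 1) = if f a + 1 = j then j + 1 + 1 else f a + 1 := by
  have hmem : ∀ x, x ∈ Set.range f ↔ x ≠ j ∧ x ≠ j + 1 := by simp [hrange]
  have hfa := (hmem (f a)).1 ⟨a, rfl⟩
  have hinj : ∀ {x y : Fin m}, (x - f a).val = (y - f a).val → x = y := fun h =>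
    sub_left_injective (Fin.val_injective h)
  have hne : ∀ {x y : Fin m}, (x - f a).val ≠ (y - f a).val → x ≠ y := fun h e => h (e ▸ rfl)
  have hd0 : (f a - f a).val = 0 := by rw [sub_self, Fin.val_zero]
  have hd1 : (f a + 1 - f a).val = 1 := by rw [Fin.val_add_one_sub_of_lt] <;> omega
  split_ifs with hj
  · subst hj
    have hd2 : (f a + 1 + 1 - f a).val = 2 := by rw [Fin.val_add_one_sub_of_lt] <;> omega
    have hd3 : (f a + 1 + 1 + 1 - f a).val = 3 := by rw [Fin.val_add_one_sub_of_lt] <;> omega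
    refine hf.apply_add_one_eq hk ((hmem _).2 ⟨?_, ?_⟩) ?_ fun x hx hbtw => ?_
    · exact hne (by rw [hd3, hd1]; omega)
    · exact hne (by rw [hd3, hd2]; omega)
    · exact hne (by rw [hd3, hd0]; omega)
    · rw [cyclicSbtw_iff, hd3] at hbtw
      obtain ⟨hxj, hxj1⟩ := (hmem x).1 hx
      rcases (by omega : (x - f a).val = 1 ∨ (x - f a).val = 2) with h | h
      · exact hxj (hinj (h.trans hd1.symm))
      · exact hxj1 (hinj (h.trans hd2.symm))
  · refine hf.apply_add_one_eq hk ((hmem _).2 ⟨hj, fun h => hfa.1 (add_right_cancel h)⟩) ?_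
      fun x _ hbtw => ?_
    · exact hne (by rw [hd1, hd0]; omega)
    · rw [cyclicSbtw_iff, hd1] at hbtw
      omega

end ChordDiagram.CycEmb

namespace ChordDiagram

theorem boundary_apply {n : ℕ} [NeZero (2 * n)] (D : ChordDiagram n) (x : Fin (2 * n)) :
    D.boundary x = D.τ x + 1 :=
  finRotate_apply _

theorem F_eq_card {n : ℕ} (hn : n ≠ 0) (D : ChordDiagram n) :
    D.F = Nat.card (Quotient (Perm.SameCycle.setoid D.boundary)) := by
  rw [F, if_neg hn, Perm.orbitRel_zpowers_eq_sameCycle_setoid]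

theorem boundary_eq_one (D : ChordDiagram 1) : D.boundary = 1 := by
  ext x
  have hx := D.fpf x
  rw [boundary_apply, Perm.one_apply]
  generalize D.τ x = y at hx
  revert x y
  decide

theorem F_eq_two (D : ChordDiagram 1) : D.F = 2 := by
  rw [F_eq_card one_ne_zero, boundary_eq_one, ← Nat.card_eq_of_bijective _
    ⟨fun a b h => Perm.sameCycle_one.1 (Quotient.exact h), Quotient.mk_surjective⟩,
    Nat.card_eq_fintype_card, Fintype.card_fin]
  rfl

theorem StepAlpha.F_add_one {n : ℕ} {D : ChordDiagram (n + 1)} {D' : ChordDiagram n}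
    (h : StepAlpha D D') : D'.F + 1 = D.F := by
  obtain ⟨j, hj, f, hf, hrange, hcomm⟩ := h
  rcases Nat.eq_zero_or_pos n with rfl | hn
  · rw [F, if_pos rfl, F_eq_two]
  have : NeZero (2 * n) := ⟨by omega⟩
  rw [finRotate_apply] at hj
  rw [hj] at hrange
  have hsucc := hf.apply_add_one_of_range_eq (by omega) (by omega) hrange
  rw [F_eq_card hn.ne', F_eq_card n.succ_ne_zero]
  refine (Perm.card_quotient_sameCycle_eq_add_one hf.1 hrange ?_ ?_ fun b => ?_).symm
  · rw [boundary_apply, ← hj, D.invol, hj]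
  · rw [boundary_apply, hj]
    exact Fin.add_one_add_one_ne_self (by omega) j
  · rw [boundary_apply, boundary_apply, boundary_apply, hsucc, hcomm, hj]

end ChordDiagram

/-- If `D'` (of order `n`) is obtained from a chord diagram `D` of order `n + 1 ≥ 1` by
reduction operation (α) (deleting an isolated chord `{i, i+1}` with `τ i = i + 1` and
renumbering), then `F(D') = F(D) - 1`, hence `n + 1 - F(D') = (n + 1) + 1 - F(D)`;
in particular operation (α) preserves realizability on the torus. -/
theorem stepAlpha_boundary_components (n : ℕ) (D : ChordDiagram (n + 1))
    (D' : ChordDiagram n) (h : ChordDiagram.StepAlpha D D') :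
    D'.F + 1 = D.F ∧
    (n : ℤ) + 1 - (D'.F : ℤ) = ((n : ℤ) + 1) + 1 - (D.F : ℤ) ∧
    (((n : ℤ) + 1) + 1 - (D.F : ℤ) ≤ 2 ↔ (n : ℤ) + 1 - (D'.F : ℤ) ≤ 2) := by
  have hF := h.F_add_one
  exact ⟨hF, by omega, by omega⟩
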